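/- arXiv:2405.06938 — 3 statements merged into one kernel-verified Lean document; each statement's English description precedes it below -/
import Mathlib

section
/- Let Φ, Ψ : ℝ → Z be continuous functions into a metric space Z. If 𝔐_Ψ ⊆ 𝔐_Φ, then 𝔑_Ψ ⊆ 𝔑_Φ; that is, uniform comparability by character of recurrence implies comparability. -/
/-!
Interleave a return sequence `t` of `Ψ` with the zero sequence. The translates of `Ψ` still
converge to `Ψ` along the interleaved sequence, so by hypothesis the translates of `Φ` converge
along it to some `g`. Along the odd terms these translates are all equal to `Φ`, which forces
`g = Φ`; the even terms then give `Φ^{t_n} → Φ`.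
-/

open Filter Stream'

section

variable {ι κ α β : Type*} [TopologicalSpace α] [UniformSpace β]

theorem tendstoLocallyUniformly_const (f : α → β) (p : Filter ι) :
    TendstoLocallyUniformly (fun _ => f) f p :=
  fun _ hu _ => ⟨Set.univ, univ_mem, .of_forall fun _ _ _ => refl_mem_uniformity hu⟩

theorem TendstoLocallyUniformly.comp_tendsto {F : ι → α → β} {f : α → β} {p : Filter ι}
    (h : TendstoLocallyUniformly F f p) {φ : κ → ι} {q : Filter κ} (hφ : Tendsto φ q p) :
    TendstoLocallyUniformly (fun k => F (φ k)) f q :=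
  fun u hu x => (h u hu x).imp fun _ ⟨hs, hev⟩ => ⟨hs, hφ.eventually hev⟩

theorem tendstoLocallyUniformly_comp_interleave_iff {F : ι → α → β} {f : α → β}
    {a b : Stream' ι} :
    TendstoLocallyUniformly (fun n => F ((a ⋈ b).get n)) f atTop ↔
      TendstoLocallyUniformly (fun n => F (a.get n)) f atTop ∧
        TendstoLocallyUniformly (fun n => F (b.get n)) f atTop := by
  constructor
  · intro h
    constructor
    · simpa only [get_interleave_left] using
        h.comp_tendsto (tendsto_atTop_mono (fun n => show n ≤ _ by omega) tendsto_id :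
          Tendsto (fun n => 2 * n) atTop atTop)
    · simpa only [get_interleave_right] using
        h.comp_tendsto (tendsto_atTop_mono (fun n => show n ≤ _ by omega) tendsto_id :
          Tendsto (fun n => 2 * n + 1) atTop atTop)
  · rintro ⟨ha, hb⟩ u hu x
    obtain ⟨s, hs, hev_a⟩ := ha u hu x
    obtain ⟨s', hs', hev_b⟩ := hb u hu x
    obtain ⟨N, hN⟩ := eventually_atTop.1 hev_a
    obtain ⟨N', hN'⟩ := eventually_atTop.1 hev_b
    refine ⟨s ∩ s', inter_mem hs hs', eventually_atTop.2 ⟨2 * max N N', fun n hn y hy => ?_⟩⟩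
    obtain ⟨k, rfl | rfl⟩ := n.even_or_odd'
    · simpa only [get_interleave_left] using hN k (by omega) y hy.1
    · simpa only [get_interleave_right] using hN' k (by omega) y hy.2

end

theorem comparable_of_uniformlyComparable_general {Z : Type*} [MetricSpace Z]
    (Φ Ψ : ℝ → Z) (hΨ : Continuous Ψ)
    (hMM : ∀ t : ℕ → ℝ,
      (∃ g : ℝ → Z, Continuous g ∧
        TendstoLocallyUniformly (fun n s => Ψ (s + t n)) g atTop) →
      (∃ g : ℝ → Z, Continuous g ∧
        TendstoLocallyUniformly (fun n s => Φ (s + t n)) g atTop)) :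
    ∀ t : ℕ → ℝ,
      TendstoLocallyUniformly (fun n s => Ψ (s + t n)) Ψ atTop →
      TendstoLocallyUniformly (fun n s => Φ (s + t n)) Φ atTop := by
  intro t ht
  have hΨ_interleave : TendstoLocallyUniformly
      (fun n s => Ψ (s + (t ⋈ const 0).get n)) Ψ atTop :=
    tendstoLocallyUniformly_comp_interleave_iff (F := fun h s => Ψ (s + h)) |>.2
      ⟨ht, by simpa only [get_const, add_zero] using tendstoLocallyUniformly_const Ψ atTop⟩
  obtain ⟨g, -, hg⟩ := hMM _ ⟨Ψ, hΨ, hΨ_interleave⟩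
  obtain ⟨hg_t, hg_zero⟩ := tendstoLocallyUniformly_comp_interleave_iff
    (F := fun h s => Φ (s + h)) |>.1 hg
  obtain rfl : g = Φ := funext fun s => tendsto_nhds_unique
    (by simpa only [get_const, add_zero] using
      hg_zero.tendstoLocallyUniformlyOn.tendsto_at (Set.mem_univ s))
    tendsto_const_nhds
  exact hg_t

/-- Theorem 2.5(1): uniform comparability by character of recurrence implies
comparability: if every sequence of shifts along which the translates of `Ψ`
converge locally uniformly (to some continuous limit) is also a sequence along which the
translates of `Φ` converge locally uniformly, then every sequence of shifts along which
`Ψ^{t_n} → Ψ` locally uniformly is a sequence along which `Φ^{t_n} → Φ` locally uniformly. -/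
theorem comparable_of_uniformlyComparable {Z : Type*} [MetricSpace Z]
    (Φ Ψ : ℝ → Z) (hΦ : Continuous Φ) (hΨ : Continuous Ψ)
    (hMM : ∀ t : ℕ → ℝ,
      (∃ g : ℝ → Z, Continuous g ∧
        TendstoLocallyUniformly (fun n s => Ψ (s + t n)) g atTop) →
      (∃ g : ℝ → Z, Continuous g ∧
        TendstoLocallyUniformly (fun n s => Φ (s + t n)) g atTop)) :
    ∀ t : ℕ → ℝ,
      TendstoLocallyUniformly (fun n s => Ψ (s + t n)) Ψ atTop →
      TendstoLocallyUniformly (fun n s => Φ (s + t n)) Φ atTop :=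
  comparable_of_uniformlyComparable_general Φ Ψ hΨ hMM
end

section
/- Let Φ, Ψ : ℝ → Z be continuous functions into a metric space Z. If 𝔐ᵘ_Ψ ⊆ 𝔐ᵘ_Φ, then 𝔑ᵘ_Ψ ⊆ 𝔑ᵘ_Φ, where the superscript u refers to uniform convergence on all of ℝ. -/
/-!
Interleave `t` with the constant sequence `0`. Along the interleaved sequence the translates of
`Ψ` still converge uniformly to `Ψ`, so by hypothesis the translates of `Φ` converge uniformly to
some `g`; the odd-indexed translates are all `Φ` itself, which forces `g = Φ`, and the
even-indexed ones are the translates along `t`.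
-/

open Filter Topology

def interleave {α : Type*} (a b : ℕ → α) (n : ℕ) : α :=
  if Even n then a (n / 2) else b (n / 2)

section Interleave

variable {α β : Type*} (a b : ℕ → α)

@[simp]
theorem interleave_two_mul (n : ℕ) : interleave a b (2 * n) = a n := by
  simp [interleave]

@[simp]
theorem interleave_two_mul_add_one (n : ℕ) : interleave a b (2 * n + 1) = b n := by
  simp [interleave, Nat.add_div]

theorem comp_interleave (f : α → β) : f ∘ interleave a b = interleave (f ∘ a) (f ∘ b) := by
  funext n
  simp only [Function.comp_apply, interleave, apply_ite f]

theorem tendsto_interleave_iff {l : Filter α} :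
    Tendsto (interleave a b) atTop l ↔ Tendsto a atTop l ∧ Tendsto b atTop l := by
  constructor
  · intro h
    constructor
    · simpa [Function.comp_def] using
        h.comp (strictMono_mul_left_of_pos two_pos).tendsto_atTop
    · simpa [Function.comp_def] using
        h.comp (strictMono_mul_left_of_pos two_pos |>.add_const 1).tendsto_atTop
  · rintro ⟨ha, hb⟩ s hs
    obtain ⟨N, hN⟩ := eventually_atTop.1 (ha hs)
    obtain ⟨M, hM⟩ := eventually_atTop.1 (hb hs)
    refine eventually_atTop.2 ⟨2 * (N + M), fun n hn => ?_⟩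
    obtain ⟨k, rfl | rfl⟩ := Nat.even_or_odd' n
    · simpa using hN k (by omega)
    · simpa using hM k (by omega)

end Interleave

theorem tendsto_apply_of_forall_exists_tendsto {T X Y : Type*} [TopologicalSpace X]
    [TopologicalSpace Y] [T1Space Y] (A : T → X) (B : T → Y) (p : T)
    (hAB : ∀ t : ℕ → T, (∃ x, Tendsto (A ∘ t) atTop (𝓝 x)) → ∃ y, Tendsto (B ∘ t) atTop (𝓝 y))
    (t : ℕ → T) (ht : Tendsto (A ∘ t) atTop (𝓝 (A p))) : Tendsto (B ∘ t) atTop (𝓝 (B p)) := by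
  have hA : Tendsto (A ∘ interleave t fun _ => p) atTop (𝓝 (A p)) := by
    rw [comp_interleave, tendsto_interleave_iff]
    exact ⟨ht, tendsto_const_nhds⟩
  obtain ⟨y, hy⟩ := hAB _ ⟨_, hA⟩
  rw [comp_interleave, tendsto_interleave_iff] at hy
  obtain ⟨hBt, hBp⟩ := hy
  rwa [(tendsto_const_nhds_iff.1 hBp : B p = y)]

theorem comparableUniform_of_uniformlyComparableUniform_general {Z : Type*} [MetricSpace Z]
    (Φ Ψ : ℝ → Z)
    (hMM : ∀ t : ℕ → ℝ,
      (∃ g : ℝ → Z, TendstoUniformly (fun n s => Ψ (s + t n)) g atTop) →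
      (∃ g : ℝ → Z, TendstoUniformly (fun n s => Φ (s + t n)) g atTop)) :
    ∀ t : ℕ → ℝ,
      TendstoUniformly (fun n s => Ψ (s + t n)) Ψ atTop →
      TendstoUniformly (fun n s => Φ (s + t n)) Φ atTop := by
  let shift (F : ℝ → Z) (h : ℝ) : UniformFun ℝ Z := UniformFun.ofFun fun s => F (s + h)
  have hshift (F : ℝ → Z) (t : ℕ → ℝ) (g : ℝ → Z) :
      TendstoUniformly (fun n s => F (s + t n)) g atTop ↔
        Tendsto (shift F ∘ t) atTop (𝓝 (UniformFun.ofFun g)) :=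
    UniformFun.tendsto_iff_tendstoUniformly.symm
  have hshift_zero (F : ℝ → Z) : UniformFun.ofFun F = shift F 0 := by
    simp only [shift, add_zero]
  intro t ht
  rw [hshift, hshift_zero] at ht ⊢
  refine tendsto_apply_of_forall_exists_tendsto _ _ 0 (fun u ⟨G, hG⟩ => ?_) t ht
  obtain ⟨g, hg⟩ := hMM u ⟨G.toFun, (hshift Ψ u _).2 hG⟩
  exact ⟨_, (hshift Φ u g).1 hg⟩

/-- Theorem 2.5(2): if every sequence of shifts along which the translates of `Ψ`
converge uniformly on all of `ℝ` (to some limit) is also a sequence along which the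
translates of `Φ` converge uniformly, then every sequence of shifts with
`Ψ^{t_n} → Ψ` uniformly on `ℝ` is a sequence with `Φ^{t_n} → Φ` uniformly on `ℝ`. -/
theorem comparableUniform_of_uniformlyComparableUniform {Z : Type*} [MetricSpace Z]
    (Φ Ψ : ℝ → Z) (hΦ : Continuous Φ) (hΨ : Continuous Ψ)
    (hMM : ∀ t : ℕ → ℝ,
      (∃ g : ℝ → Z, TendstoUniformly (fun n s => Ψ (s + t n)) g atTop) →
      (∃ g : ℝ → Z, TendstoUniformly (fun n s => Φ (s + t n)) g atTop)) :
    ∀ t : ℕ → ℝ,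
      TendstoUniformly (fun n s => Ψ (s + t n)) Ψ atTop →
      TendstoUniformly (fun n s => Φ (s + t n)) Φ atTop :=
  comparableUniform_of_uniformlyComparableUniform_general Φ Ψ hMM
end

section
/- Let τ > 0, η ≥ 0, let π be a Borel probability measure on the interval [−τ, 0], and let h : ℝ → [0, ∞] be measurable. Then for all real numbers s ≤ t: ∫_s^t ∫_{[−τ,0]} e^{ηr} h(r+θ) dπ(θ) dr ≤ e^{ητ} ∫_{s−τ}^t e^{ηr} h(r) dr. -/
/-!
Since `θ ≥ -τ` and `η ≥ 0`, the weight satisfies `e^{ηr} ≤ e^{ητ} e^{η(r+θ)}`, so the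
integrand is bounded by `e^{ητ} g(r + θ)` with `g(x) = e^{ηx} h(x)`. After exchanging the
two integrals, each shifted window `[s + θ, t + θ]` lies inside `[s - τ, t]`, and `π` has
mass at most one.
-/

open MeasureTheory Real Set
open scoped ENNReal

lemma setLIntegral_Icc_comp_add_right (g : ℝ → ℝ≥0∞) (a b c : ℝ) :
    ∫⁻ r in Icc a b, g (r + c) = ∫⁻ x in Icc (a + c) (b + c), g x := by
  simpa [preimage_add_const_Icc] using
    (measurePreserving_add_right volume c).setLIntegral_comp_preimage_emb
      (measurableEmbedding_addRight c) g (Icc (a + c) (b + c))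

lemma lintegral_Icc_lintegral_delay_le (ν : Measure ℝ) [SFinite ν] {g : ℝ → ℝ≥0∞}
    (hg : Measurable g) (τ s t : ℝ) :
    ∫⁻ r in Icc s t, ∫⁻ θ in Icc (-τ) 0, g (r + θ) ∂ν ≤
      ν (Icc (-τ) 0) * ∫⁻ x in Icc (s - τ) t, g x := by
  rw [lintegral_lintegral_swap (f := fun r θ => g (r + θ))
    (hg.comp measurable_add).aemeasurable, mul_comm, ← setLIntegral_const]
  refine setLIntegral_mono' measurableSet_Icc fun θ hθ => ?_
  rw [setLIntegral_Icc_comp_add_right]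
  exact lintegral_mono_set (Icc_subset_Icc (by linarith [hθ.1]) (by linarith [hθ.2]))

lemma exp_mul_le_exp_mul_mul_exp_mul_add {η τ θ : ℝ} (hη : 0 ≤ η) (hθ : -τ ≤ θ)
    (r : ℝ) :
    exp (η * r) ≤ exp (η * τ) * exp (η * (r + θ)) := by
  rw [← exp_add, exp_le_exp]
  nlinarith

theorem delay_exchange_estimate_general (τ η : ℝ) (hη : 0 ≤ η)
    (pm : Measure ℝ) [IsProbabilityMeasure pm]
    (h : ℝ → ENNReal) (hh : Measurable h) (s t : ℝ) :
    ∫⁻ r in Set.Icc s t,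
        (∫⁻ θ in Set.Icc (-τ) 0, ENNReal.ofReal (exp (η * r)) * h (r + θ) ∂pm) ≤
      ENNReal.ofReal (exp (η * τ)) *
        ∫⁻ r in Set.Icc (s - τ) t, ENNReal.ofReal (exp (η * r)) * h r := by
  set g : ℝ → ℝ≥0∞ := fun x => ENNReal.ofReal (exp (η * x)) * h x
  have hg : Measurable g := by fun_prop
  have weight_le (r : ℝ) {θ : ℝ} (hθ : θ ∈ Icc (-τ) 0) :
      ENNReal.ofReal (exp (η * r)) * h (r + θ) ≤
        ENNReal.ofReal (exp (η * τ)) * g (r + θ) := by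
    rw [← mul_assoc, ← ENNReal.ofReal_mul (exp_nonneg _)]
    gcongr
    exact exp_mul_le_exp_mul_mul_exp_mul_add hη hθ.1 r
  calc _ ≤ ∫⁻ r in Icc s t, ∫⁻ θ in Icc (-τ) 0,
          ENNReal.ofReal (exp (η * τ)) * g (r + θ) ∂pm :=
        lintegral_mono fun r => setLIntegral_mono' measurableSet_Icc fun θ => weight_le r
    _ = ENNReal.ofReal (exp (η * τ)) *
          ∫⁻ r in Icc s t, ∫⁻ θ in Icc (-τ) 0, g (r + θ) ∂pm := by
        simp_rw [lintegral_const_mul' _ _ ENNReal.ofReal_ne_top]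
    _ ≤ ENNReal.ofReal (exp (η * τ)) *
          (pm (Icc (-τ) 0) * ∫⁻ x in Icc (s - τ) t, g x) := by
        gcongr
        exact lintegral_Icc_lintegral_delay_le pm hg τ s t
    _ ≤ ENNReal.ofReal (exp (η * τ)) * ∫⁻ x in Icc (s - τ) t, g x := by
        gcongr
        exact mul_le_of_le_one_left' prob_le_one

/-- Inequality (22): for a delay `τ > 0`, `η ≥ 0`, a probability measure `pm` on
`[-τ, 0]` and a nonnegative measurable function `h`,
`∫_s^t ∫_{[-τ,0]} e^{ηr} h(r+θ) dpm(θ) dr ≤ e^{ητ} ∫_{s-τ}^t e^{ηr} h(r) dr`. -/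
theorem delay_exchange_estimate (τ η : ℝ) (hτ : 0 < τ) (hη : 0 ≤ η)
    (pm : Measure ℝ) [IsProbabilityMeasure pm] (hpm : pm (Set.Icc (-τ) 0)ᶜ = 0)
    (h : ℝ → ENNReal) (hh : Measurable h) (s t : ℝ) (hst : s ≤ t) :
    ∫⁻ r in Set.Icc s t,
        (∫⁻ θ in Set.Icc (-τ) 0, ENNReal.ofReal (exp (η * r)) * h (r + θ) ∂pm) ≤
      ENNReal.ofReal (exp (η * τ)) *
        ∫⁻ r in Set.Icc (s - τ) t, ENNReal.ofReal (exp (η * r)) * h r :=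
  delay_exchange_estimate_general τ η hη pm h hh s t
end
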